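/- Consider n agents with nonzero opinion vectors x_1(k),…,x_n(k) ∈ [0,1]^m \ {0} at time k, and let ε ∈ [0,1]. Define s_{ij} = sim(x_i(k), x_j(k)) if sim(x_i(k), x_j(k)) ≥ ε and s_{ij} = 0 otherwise, where sim(u,v) = ⟨u,v⟩/(‖u‖‖v‖), and let w_{ij} = s_{ij} / Σ_{p=1}^n s_{ip} (the denominator is positive since s_{ii} = 1 ≥ ε). Update the opinions by x_i(k+1) = Σ_{j=1}^n w_{ij} x_j(k). Then the opinion diameter d(X) = max_{i,j} arccos(sim(x_i, x_j)) is non-increasing: d(X(k+1)) ≤ d(X(k)). -/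

import Mathlib

open scoped RealInnerProductSpace

noncomputable def cosSim {m : ℕ} (u v : EuclideanSpace ℝ (Fin m)) : ℝ :=
  ⟪u, v⟫ / (‖u‖ * ‖v‖)

/-!
For a fixed `u` in the nonnegative orthant, the cosine similarity of `u` with a nonnegative
combination of vectors is at least the smallest similarity of `u` with one of them: the inner
product is linear in the combination while its norm is only subadditive. Applying this to the
updated opinions once in each argument bounds every new pairwise similarity from below by an old
one, so every new pairwise angle is at most an old one.
-/

open Finset

section InnerProductSpace

variable {E ι : Type*} [NormedAddCommGroup E] [InnerProductSpace ℝ E] [Fintype ι]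

lemma mul_norm_mul_norm_le_inner_sum_smul {u : E} {v : ι → E} {c : ι → ℝ} {a : ℝ}
    (ha : 0 ≤ a) (hc : ∀ j, 0 ≤ c j) (hv : ∀ j, a * (‖u‖ * ‖v j‖) ≤ ⟪u, v j⟫) :
    a * (‖u‖ * ‖∑ j, c j • v j‖) ≤ ⟪u, ∑ j, c j • v j⟫ := by
  have hnorm : ‖∑ j, c j • v j‖ ≤ ∑ j, c j * ‖v j‖ :=
    (norm_sum_le _ _).trans_eq <| sum_congr rfl fun j _ => by
      rw [norm_smul, Real.norm_of_nonneg (hc j)]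
  calc a * (‖u‖ * ‖∑ j, c j • v j‖) ≤ a * (‖u‖ * ∑ j, c j * ‖v j‖) := by gcongr
    _ = ∑ j, c j * (a * (‖u‖ * ‖v j‖)) := by
      rw [mul_sum, mul_sum]; exact sum_congr rfl fun j _ => by ring
    _ ≤ ∑ j, c j * ⟪u, v j⟫ := sum_le_sum fun j _ => mul_le_mul_of_nonneg_left (hv j) (hc j)
    _ = ⟪u, ∑ j, c j • v j⟫ := by simp only [inner_sum, real_inner_smul_right]

lemma sum_smul_ne_zero_of_inner_nonneg {v : ι → E} {c : ι → ℝ} {i : ι} (hc : ∀ j, 0 ≤ c j)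
    (hci : 0 < c i) (hvi : v i ≠ 0) (hv : ∀ j, 0 ≤ ⟪v i, v j⟫) : ∑ j, c j • v j ≠ 0 := by
  intro h
  have hle : c i * ⟪v i, v i⟫ ≤ ⟪v i, ∑ j, c j • v j⟫ := by
    simp only [inner_sum, real_inner_smul_right]
    exact single_le_sum (fun j _ => mul_nonneg (hc j) (hv j)) (mem_univ i)
  rw [h, inner_zero_right, real_inner_self_eq_norm_sq] at hle
  have := norm_pos_iff.mpr hvi
  exact hle.not_gt (by positivity)

end InnerProductSpace

section CosSim

variable {m : ℕ}

lemma cosSim_comm (u v : EuclideanSpace ℝ (Fin m)) : cosSim u v = cosSim v u := by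
  rw [cosSim, cosSim, real_inner_comm, mul_comm]

lemma cosSim_self {u : EuclideanSpace ℝ (Fin m)} (hu : u ≠ 0) : cosSim u u = 1 := by
  rw [cosSim, real_inner_self_eq_norm_mul_norm]
  exact div_self (mul_self_ne_zero.mpr (norm_ne_zero_iff.mpr hu))

lemma inner_nonneg_of_forall_nonneg {u v : EuclideanSpace ℝ (Fin m)}
    (hu : ∀ p, 0 ≤ u p) (hv : ∀ p, 0 ≤ v p) : 0 ≤ ⟪u, v⟫ := by
  rw [PiLp.inner_apply]
  exact sum_nonneg fun p _ => mul_nonneg (hv p) (hu p)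

lemma cosSim_nonneg {u v : EuclideanSpace ℝ (Fin m)}
    (hu : ∀ p, 0 ≤ u p) (hv : ∀ p, 0 ≤ v p) : 0 ≤ cosSim u v :=
  div_nonneg (inner_nonneg_of_forall_nonneg hu hv) (by positivity)

lemma mul_norm_mul_norm_le_inner_of_le_cosSim {u v : EuclideanSpace ℝ (Fin m)} {a : ℝ}
    (h : a ≤ cosSim u v) : a * (‖u‖ * ‖v‖) ≤ ⟪u, v⟫ := by
  rcases eq_or_ne u 0 with rfl | hu
  · simp
  rcases eq_or_ne v 0 with rfl | hv
  · simp
  have := norm_pos_iff.mpr hu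
  have := norm_pos_iff.mpr hv
  exact (le_div_iff₀ (by positivity)).mp h

lemma le_cosSim_of_mul_norm_mul_norm_le_inner {u v : EuclideanSpace ℝ (Fin m)} {a : ℝ}
    (hu : u ≠ 0) (hv : v ≠ 0) (h : a * (‖u‖ * ‖v‖) ≤ ⟪u, v⟫) : a ≤ cosSim u v := by
  have := norm_pos_iff.mpr hu
  have := norm_pos_iff.mpr hv
  exact (le_div_iff₀ (by positivity)).mpr h

lemma exists_cosSim_le_cosSim_sum_smul {ι : Type*} [Fintype ι] [Nonempty ι]
    {u : EuclideanSpace ℝ (Fin m)} {v : ι → EuclideanSpace ℝ (Fin m)} {c : ι → ℝ}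
    (hu0 : u ≠ 0) (hu : ∀ p, 0 ≤ u p) (hv : ∀ j p, 0 ≤ v j p) (hc : ∀ j, 0 ≤ c j)
    (hsum : ∑ j, c j • v j ≠ 0) : ∃ b, cosSim u (v b) ≤ cosSim u (∑ j, c j • v j) := by
  obtain ⟨b, hb⟩ := Finite.exists_min fun j => cosSim u (v j)
  refine ⟨b, le_cosSim_of_mul_norm_mul_norm_le_inner hu0 hsum ?_⟩
  exact mul_norm_mul_norm_le_inner_sum_smul (cosSim_nonneg hu (hv b)) hc
    fun j => mul_norm_mul_norm_le_inner_of_le_cosSim (hb j)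

end CosSim

section Diameter

variable {ι : Type*} [Fintype ι] [Nonempty ι] {m : ℕ}

noncomputable def angleDiameter (x : ι → EuclideanSpace ℝ (Fin m)) : ℝ :=
  univ.sup' univ_nonempty fun p : ι × ι => Real.arccos (cosSim (x p.1) (x p.2))

lemma angleDiameter_le_of_forall_exists_cosSim_le {x y : ι → EuclideanSpace ℝ (Fin m)}
    (h : ∀ i j, ∃ a b, cosSim (y a) (y b) ≤ cosSim (x i) (x j)) :
    angleDiameter x ≤ angleDiameter y := by
  refine sup'_le _ _ fun ⟨i, j⟩ _ => ?_
  obtain ⟨a, b, hab⟩ := h i j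
  exact (Real.arccos_le_arccos hab).trans
    (le_sup' (fun p : ι × ι => Real.arccos (cosSim (y p.1) (y p.2))) (mem_univ (a, b)))

theorem angleDiameter_sum_smul_le {x : ι → EuclideanSpace ℝ (Fin m)} {w : ι → ι → ℝ}
    (hx : ∀ i p, 0 ≤ x i p) (hx0 : ∀ i, x i ≠ 0) (hw : ∀ i j, 0 ≤ w i j)
    (hw_self : ∀ i, 0 < w i i) :
    angleDiameter (fun i => ∑ j, w i j • x j) ≤ angleDiameter x := by
  set x' := fun i => ∑ j, w i j • x j with hx'
  have hx'_nonneg : ∀ i p, 0 ≤ x' i p := fun i p => by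
    simp only [hx', WithLp.ofLp_sum, WithLp.ofLp_smul, Finset.sum_apply, Pi.smul_apply, smul_eq_mul]
    exact sum_nonneg fun j _ => mul_nonneg (hw i j) (hx j p)
  have hx'0 : ∀ i, x' i ≠ 0 := fun i =>
    sum_smul_ne_zero_of_inner_nonneg (hw i) (hw_self i) (hx0 i)
      fun j => inner_nonneg_of_forall_nonneg (hx i) (hx j)
  refine angleDiameter_le_of_forall_exists_cosSim_le fun i j => ?_
  obtain ⟨b, hb⟩ := exists_cosSim_le_cosSim_sum_smul (hx'0 i) (hx'_nonneg i) hx (hw j) (hx'0 j)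
  obtain ⟨a, ha⟩ := exists_cosSim_le_cosSim_sum_smul (hx0 b) (hx b) hx (hw i) (hx'0 i)
  refine ⟨a, b, ?_⟩
  calc cosSim (x a) (x b) = cosSim (x b) (x a) := cosSim_comm _ _
    _ ≤ cosSim (x b) (x' i) := ha
    _ = cosSim (x' i) (x b) := cosSim_comm _ _
    _ ≤ cosSim (x' i) (x' j) := hb

end Diameter

/-- **The opinion diameter is non-increasing under the angle-based ODRS update.**
Agents hold nonzero opinions `x i ∈ [0,1]^m \ {0}`. With threshold `ε ∈ [0,1]`, set
`s i j = sim(x i, x j)` if `sim(x i, x j) ≥ ε`, else `0`; normalize `w i j = s i j / ∑ p, s i p`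
and update `x' i = ∑ j, w i j • x j`. Then the diameter
`d(X) = max_{i,j} arccos (sim (x i) (x j))` satisfies `d(X') ≤ d(X)`. -/
theorem odrs_angle_diameter_nonincreasing
    {n m : ℕ} [NeZero n]
    (ε : ℝ) (hε : ε ∈ Set.Icc (0 : ℝ) 1)
    (x : Fin n → EuclideanSpace ℝ (Fin m))
    (hx : ∀ i, ∀ p : Fin m, x i p ∈ Set.Icc (0 : ℝ) 1)
    (hx0 : ∀ i, x i ≠ 0)
    (s : Fin n → Fin n → ℝ)
    (hs : ∀ i j, s i j = if ε ≤ cosSim (x i) (x j) then cosSim (x i) (x j) else 0)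
    (w : Fin n → Fin n → ℝ)
    (hw : ∀ i j, w i j = s i j / ∑ p, s i p)
    (x' : Fin n → EuclideanSpace ℝ (Fin m))
    (hx' : ∀ i, x' i = ∑ j, w i j • x j) :
    Finset.univ.sup' Finset.univ_nonempty
        (fun p : Fin n × Fin n => Real.arccos (cosSim (x' p.1) (x' p.2)))
      ≤ Finset.univ.sup' Finset.univ_nonempty
        (fun p : Fin n × Fin n => Real.arccos (cosSim (x p.1) (x p.2))) := by
  have hx_nonneg : ∀ i p, 0 ≤ x i p := fun i p => (hx i p).1
  have hs_nonneg : ∀ i j, 0 ≤ s i j := fun i j => by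
    rw [hs]
    split_ifs
    exacts [cosSim_nonneg (hx_nonneg i) (hx_nonneg j), le_rfl]
  have hs_self : ∀ i, s i i = 1 := fun i => by rw [hs, cosSim_self (hx0 i), if_pos hε.2]
  have hsum_pos : ∀ i, 0 < ∑ p, s i p := fun i =>
    (hs_self i ▸ one_pos).trans_le (single_le_sum (fun p _ => hs_nonneg i p) (mem_univ i))
  have hw_nonneg : ∀ i j, 0 ≤ w i j := fun i j => by
    rw [hw]
    exact div_nonneg (hs_nonneg i j) (hsum_pos i).le
  have hw_self : ∀ i, 0 < w i i := fun i => by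
    rw [hw, hs_self]
    exact div_pos one_pos (hsum_pos i)
  obtain rfl : x' = fun i => ∑ j, w i j • x j := funext hx'
  exact angleDiameter_sum_smul_le hx_nonneg hx0 hw_nonneg hw_self
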